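/- Let X be a Banach function space over ℝⁿ, and assume that the Hardy–Littlewood maximal operator M is bounded on X. Then M is bounded on X^r for all r ∈ (0,1), where X^r is the space with norm ‖f‖_{X^r} := ‖|f|^{1/r}‖_X^r. -/

import Mathlib

open MeasureTheory ENNReal Filter Set
open scoped NNReal ENNReal

noncomputable section

/-- The axis-parallel closed cube in `ℝⁿ` with lower corner `a` and side length `h`. -/
def Cube {n : ℕ} (a : Fin n → ℝ) (h : ℝ) : Set (Fin n → ℝ) :=
  {x | ∀ i, x i ∈ Set.Icc (a i) (a i + h)}

/-- The Hardy–Littlewood maximal operator, acting on nonnegative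
(extended-real-valued) measurable functions on `ℝⁿ`:
`Mf(x) = sup_{Q ∋ x} (1/|Q|) ∫_Q f`, the sup over all cubes `Q` containing `x`. -/
def hlMaximal {n : ℕ} (f : (Fin n → ℝ) → ℝ≥0∞) (x : Fin n → ℝ) : ℝ≥0∞ :=
  ⨆ (a : Fin n → ℝ) (h : ℝ) (_ : 0 < h) (_ : x ∈ Cube a h),
    (∫⁻ y in Cube a h, f y) / volume (Cube a h)

/-- The Hardy–Littlewood maximal operator of a real-valued function. -/
def hlMaximalR {n : ℕ} (f : (Fin n → ℝ) → ℝ) : (Fin n → ℝ) → ℝ≥0∞ :=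
  hlMaximal (fun x => (‖f x‖₊ : ℝ≥0∞))

/-- The non-increasing rearrangement `f^*(t) = inf {α : |{|f| > α}| ≤ t}`. -/
def decRearr {n : ℕ} (f : (Fin n → ℝ) → ℝ≥0∞) (t : ℝ≥0∞) : ℝ≥0∞ :=
  sInf {α : ℝ≥0∞ | volume {x | α < f x} ≤ t}

/-- The local maximal operator `m_λ f(x) = sup_{Q ∋ x} (f χ_Q)^*(λ|Q|)`. -/
def locMax {n : ℕ} (lam : ℝ) (f : (Fin n → ℝ) → ℝ≥0∞) (x : Fin n → ℝ) : ℝ≥0∞ :=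
  ⨆ (a : Fin n → ℝ) (h : ℝ) (_ : 0 < h) (_ : x ∈ Cube a h),
    decRearr (Set.indicator (Cube a h) f) (ENNReal.ofReal lam * volume (Cube a h))

/-- A Banach function space over `ℝⁿ`, described (à la Bennett–Sharpley and
Lorist–Nieraeth) by its function norm `ρ` on nonnegative extended-real-valued
functions:  `ρ` is a norm on measurable functions satisfying the ideal property,
the Fatou property and the saturation property. -/
structure BanachFunctionSpace (n : ℕ) where
  ρ : ((Fin n → ℝ) → ℝ≥0∞) → ℝ≥0∞
  congr_ae : ∀ f g, Measurable f → Measurable g → f =ᵐ[volume] g → ρ f = ρ g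
  eq_zero_iff : ∀ f, Measurable f → (ρ f = 0 ↔ f =ᵐ[volume] 0)
  add_le : ∀ f g, Measurable f → Measurable g → ρ (fun x => f x + g x) ≤ ρ f + ρ g
  smul_eq : ∀ (c : ℝ≥0) f, Measurable f → ρ (fun x => (c : ℝ≥0∞) * f x) = (c : ℝ≥0∞) * ρ f
  -- ideal property
  mono : ∀ f g, Measurable f → Measurable g → (∀ᵐ x ∂volume, f x ≤ g x) → ρ f ≤ ρ g
  -- Fatou property
  fatou : ∀ f : ℕ → (Fin n → ℝ) → ℝ≥0∞, (∀ j, Measurable (f j)) →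
    (∀ x, Monotone fun j => f j x) → (⨆ j, ρ (f j)) < ⊤ →
    ρ (fun x => ⨆ j, f j x) = ⨆ j, ρ (f j)
  -- saturation property
  saturation : ∀ E : Set (Fin n → ℝ), MeasurableSet E → 0 < volume E →
    ∃ F, F ⊆ E ∧ MeasurableSet F ∧ 0 < volume F ∧ ρ (Set.indicator F fun _ => 1) < ⊤

/-- The associate (Köthe dual) norm: `‖f‖_{X'} = sup_{‖g‖_X ≤ 1} ∫ |fg|`. -/
def assocNorm {n : ℕ} (N : ((Fin n → ℝ) → ℝ≥0∞) → ℝ≥0∞)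
    (f : (Fin n → ℝ) → ℝ≥0∞) : ℝ≥0∞ :=
  ⨆ (g : (Fin n → ℝ) → ℝ≥0∞) (_ : Measurable g) (_ : N g ≤ 1), ∫⁻ x, f x * g x

/-- The norm of the rescaled space `X^p`: `‖f‖_{X^p} = ‖ |f|^{1/p} ‖_X^p`. -/
def powNorm {n : ℕ} (N : ((Fin n → ℝ) → ℝ≥0∞) → ℝ≥0∞) (p : ℝ)
    (f : (Fin n → ℝ) → ℝ≥0∞) : ℝ≥0∞ :=
  (N fun x => f x ^ (1 / p)) ^ p

/-- Boundedness of the Hardy–Littlewood maximal operator on the space with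
function norm `N`. -/
def MaximalBounded {n : ℕ} (N : ((Fin n → ℝ) → ℝ≥0∞) → ℝ≥0∞) : Prop :=
  ∃ C : ℝ≥0, ∀ f, Measurable f → N (hlMaximal f) ≤ (C : ℝ≥0∞) * N f

/-- The function `φ_X(λ) = inf {‖m_λ f‖_X : ‖f‖_X = 1}`. -/
def phiFn {n : ℕ} (N : ((Fin n → ℝ) → ℝ≥0∞) → ℝ≥0∞) (lam : ℝ) : ℝ≥0∞ :=
  ⨅ (f : (Fin n → ℝ) → ℝ≥0∞) (_ : Measurable f) (_ : N f = 1), N (locMax lam f)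

/-- Unboundedness of `φ_X` on `(0,1)`. -/
def phiUnbounded {n : ℕ} (N : ((Fin n → ℝ) → ℝ≥0∞) → ℝ≥0∞) : Prop :=
  (⨆ lam ∈ Set.Ioo (0 : ℝ) 1, phiFn N lam) = ⊤

/-- Local integrability of a weight (finite integral over every cube). -/
def LocIntegrableW {n : ℕ} (w : (Fin n → ℝ) → ℝ≥0∞) : Prop :=
  ∀ (a : Fin n → ℝ) (h : ℝ), 0 < h → (∫⁻ x in Cube a h, w x) < ⊤

/-- The `A₁` constant `[w]_{A₁} = ‖Mw/w‖_{L^∞}`. -/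
def A1Const {n : ℕ} (w : (Fin n → ℝ) → ℝ≥0∞) : ℝ≥0∞ :=
  essSup (fun x => hlMaximal w x / w x) volume

/-- The (Fujii–Wilson) `A_∞` constant `[w]_{A_∞} = sup_Q (∫_Q M(wχ_Q)) / w(Q)`. -/
def AinfConst {n : ℕ} (w : (Fin n → ℝ) → ℝ≥0∞) : ℝ≥0∞ :=
  ⨆ (a : Fin n → ℝ) (h : ℝ) (_ : 0 < h),
    (∫⁻ x in Cube a h, hlMaximal (Set.indicator (Cube a h) w) x) /
      ∫⁻ x in Cube a h, w x

/-- The `A_p` constant: for `p = 1` it is the `A₁` constant, and for `p > 1` it is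
`[w]_{A_p} = sup_Q ⟨w⟩_Q ⟨w^{-p'/p}⟩_Q^{p/p'}` (note `p'/p = 1/(p-1)` and `p/p' = p-1`). -/
def ApConst {n : ℕ} (p : ℝ) (w : (Fin n → ℝ) → ℝ≥0∞) : ℝ≥0∞ :=
  if p = 1 then A1Const w
  else
    ⨆ (a : Fin n → ℝ) (h : ℝ) (_ : 0 < h),
      ((∫⁻ x in Cube a h, w x) / volume (Cube a h)) *
        ((∫⁻ x in Cube a h, w x ^ (-(p - 1)⁻¹)) / volume (Cube a h)) ^ (p - 1)

/-- `A_p`-regularity of the space with function norm `N`: there are `C₁, C₂ > 0` such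
that every `f` in the space is dominated by an `A_p` weight `w` with `[w]_{A_p} ≤ C₁`
and `‖w‖ ≤ C₂ ‖f‖`. -/
def IsApRegular {n : ℕ} (N : ((Fin n → ℝ) → ℝ≥0∞) → ℝ≥0∞) (p : ℝ) : Prop :=
  ∃ C₁ C₂ : ℝ≥0, 0 < C₁ ∧ 0 < C₂ ∧
    ∀ f, Measurable f → N f < ⊤ →
      ∃ w : (Fin n → ℝ) → ℝ≥0∞, Measurable w ∧ LocIntegrableW w ∧
        (∀ᵐ x ∂volume, f x ≤ w x) ∧ ApConst p w ≤ (C₁ : ℝ≥0∞) ∧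
        N w ≤ (C₂ : ℝ≥0∞) * N f

/-- `A_∞`-regularity of the space with function norm `N`. -/
def IsAinfRegular {n : ℕ} (N : ((Fin n → ℝ) → ℝ≥0∞) → ℝ≥0∞) : Prop :=
  ∃ C₁ C₂ : ℝ≥0, 0 < C₁ ∧ 0 < C₂ ∧
    ∀ f, Measurable f → N f < ⊤ →
      ∃ w : (Fin n → ℝ) → ℝ≥0∞, Measurable w ∧ LocIntegrableW w ∧
        (∀ᵐ x ∂volume, f x ≤ w x) ∧ AinfConst w ≤ (C₁ : ℝ≥0∞) ∧
        N w ≤ (C₂ : ℝ≥0∞) * N f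

/-- The Fefferman–Stein sharp maximal function
`f^#(x) = sup_{Q ∋ x} (1/|Q|) ∫_Q |f - ⟨f⟩_Q|`. -/
def sharpMax {n : ℕ} (f : (Fin n → ℝ) → ℝ) (x : Fin n → ℝ) : ℝ≥0∞ :=
  ⨆ (a : Fin n → ℝ) (h : ℝ) (_ : 0 < h) (_ : x ∈ Cube a h),
    (∫⁻ y in Cube a h,
      (‖f y - (∫ z in Cube a h, f z) / (volume (Cube a h)).toReal‖₊ : ℝ≥0∞)) /
      volume (Cube a h)

/-- Membership in `S₀(ℝⁿ)`: all level sets `{|f| > α}`, `α > 0`, have finite measure. -/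
def MemS0 {n : ℕ} (f : (Fin n → ℝ) → ℝ) : Prop :=
  ∀ α : ℝ, 0 < α → volume {x | α < |f x|} < ⊤

/-- `p`-convexity of a Banach function space. -/
def IsPConvex {n : ℕ} (X : BanachFunctionSpace n) (p : ℝ) : Prop :=
  ∀ f g, Measurable f → Measurable g →
    X.ρ (fun x => (f x ^ p + g x ^ p) ^ (1 / p)) ≤ (X.ρ f ^ p + X.ρ g ^ p) ^ (1 / p)

/-- `q`-concavity of a Banach function space. -/
def IsQConcave {n : ℕ} (X : BanachFunctionSpace n) (q : ℝ) : Prop :=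
  ∀ f g, Measurable f → Measurable g →
    (X.ρ f ^ q + X.ρ g ^ q) ^ (1 / q) ≤ X.ρ (fun x => (f x ^ q + g x ^ q) ^ (1 / q))

section Aux

open scoped Topology

variable {n : ℕ}

lemma measurableSet_cube (a : Fin n → ℝ) (h : ℝ) : MeasurableSet (Cube a h) := by
  have : Cube a h = ⋂ i, (fun x : Fin n → ℝ => x i) ⁻¹' Set.Icc (a i) (a i + h) := by
    ext x; simp [Cube]
  rw [this]
  exact MeasurableSet.iInter fun i => (measurable_pi_apply i) measurableSet_Icc

lemma volume_cube (a : Fin n → ℝ) (h : ℝ) :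
    volume (Cube a h) = ENNReal.ofReal h ^ n := by
  have : Cube a h = Set.pi Set.univ (fun i => Set.Icc (a i) (a i + h)) := by
    ext x; simp [Cube, Set.mem_univ_pi, Pi.le_def, forall_and]
  rw [this, volume_pi_pi]
  simp [Real.volume_Icc]

lemma volume_cube_pos (a : Fin n → ℝ) {h : ℝ} (hh : 0 < h) :
    0 < volume (Cube a h) := by
  rw [volume_cube]
  rw [pos_iff_ne_zero]
  exact pow_ne_zero n (ENNReal.ofReal_pos.mpr hh).ne'

lemma volume_cube_lt_top (a : Fin n → ℝ) (h : ℝ) :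
    volume (Cube a h) < ⊤ := by
  rw [volume_cube]
  exact ENNReal.pow_lt_top ENNReal.ofReal_lt_top

/-- The maximal function as a countable supremum over rational cubes. -/
lemma hlMaximal_eq_rat (f : (Fin n → ℝ) → ℝ≥0∞) (x : Fin n → ℝ) :
    hlMaximal f x = ⨆ p : (Fin n → ℚ) × ℚ,
      ⨆ (_ : (0:ℝ) < (p.2 : ℝ)) (_ : x ∈ Cube (fun i => (p.1 i : ℝ)) (p.2 : ℝ)),
        (∫⁻ y in Cube (fun i => (p.1 i : ℝ)) (p.2 : ℝ), f y) /
          volume (Cube (fun i => (p.1 i : ℝ)) (p.2 : ℝ)) := by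
  apply le_antisymm
  · rw [hlMaximal]
    refine iSup_le fun a => iSup_le fun h => iSup_le fun hh => iSup_le fun hx => ?_
    set I := ∫⁻ y in Cube a h, f y with hI
    set S := ⨆ p : (Fin n → ℚ) × ℚ,
      ⨆ (_ : (0:ℝ) < (p.2 : ℝ)) (_ : x ∈ Cube (fun i => (p.1 i : ℝ)) (p.2 : ℝ)),
        (∫⁻ y in Cube (fun i => (p.1 i : ℝ)) (p.2 : ℝ), f y) /
          volume (Cube (fun i => (p.1 i : ℝ)) (p.2 : ℝ)) with hS
    have main : ∀ k : ℕ, I / ENNReal.ofReal (h + 2 * (1 / (k + 1))) ^ n ≤ S := by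
      intro k
      set δ : ℝ := 1 / (k + 1) with hδdef
      have hδ : 0 < δ := by positivity
      have h1 := fun i => exists_rat_btwn (show a i - δ < a i by linarith)
      choose a' ha'1 ha'2 using h1
      obtain ⟨h', hh'1, hh'2⟩ := exists_rat_btwn (show h + δ < h + 2 * δ by linarith)
      have hh'pos : (0:ℝ) < (h' : ℝ) := by linarith
      have hsub : Cube a h ⊆ Cube (fun i => (a' i : ℝ)) (h' : ℝ) := by
        intro y hy i
        have := hy i
        exact ⟨by linarith [this.1, ha'2 i], by linarith [this.2, ha'1 i]⟩
      have hx' : x ∈ Cube (fun i => (a' i : ℝ)) (h' : ℝ) := hsub hx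
      have step1 : I / ENNReal.ofReal (h + 2 * δ) ^ n ≤
          (∫⁻ y in Cube (fun i => (a' i : ℝ)) (h' : ℝ), f y) /
            volume (Cube (fun i => (a' i : ℝ)) (h' : ℝ)) := by
        rw [volume_cube]
        refine ENNReal.div_le_div (lintegral_mono_set hsub) ?_
        exact pow_le_pow_left₀ (by positivity) (ENNReal.ofReal_le_ofReal hh'2.le) n
      refine le_trans step1 ?_
      refine le_trans ?_ (le_iSup _ (a', h'))
      rw [iSup_pos hh'pos, iSup_pos hx']
    have hlim : Filter.Tendsto
        (fun k : ℕ => I / ENNReal.ofReal (h + 2 * (1 / (k + 1))) ^ n)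
        Filter.atTop (𝓝 (I / ENNReal.ofReal h ^ n)) := by
      have h1 : Filter.Tendsto (fun k : ℕ => h + 2 * (1 / (k + 1 : ℝ)))
          Filter.atTop (𝓝 h) := by
        have := (tendsto_one_div_add_atTop_nhds_zero_nat (𝕜 := ℝ)).const_mul 2
        simpa using tendsto_const_nhds.add this
      have h2 : Filter.Tendsto
          (fun k : ℕ => ENNReal.ofReal (h + 2 * (1 / (k + 1))) ^ n)
          Filter.atTop (𝓝 (ENNReal.ofReal h ^ n)) :=
        ENNReal.Tendsto.pow ((ENNReal.continuous_ofReal.tendsto h).comp h1)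
      have h3 := h2.inv
      simp only [div_eq_mul_inv]
      exact ENNReal.Tendsto.const_mul h3
        (Or.inl (by simp [ENNReal.pow_ne_top ENNReal.ofReal_ne_top]))
    have := le_of_tendsto' hlim main
    rwa [volume_cube]
  · refine iSup_le fun p => iSup_le fun hp => iSup_le fun hx => ?_
    rw [hlMaximal]
    refine le_trans ?_ (le_iSup _ (fun i => (p.1 i : ℝ)))
    refine le_trans ?_ (le_iSup _ (p.2 : ℝ))
    rw [iSup_pos hp, iSup_pos hx]

lemma measurable_hlMaximal (f : (Fin n → ℝ) → ℝ≥0∞) :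
    Measurable (hlMaximal f) := by
  have key : hlMaximal f = fun x => ⨆ p : (Fin n → ℚ) × ℚ,
      ⨆ (_ : (0:ℝ) < (p.2 : ℝ)) (_ : x ∈ Cube (fun i => (p.1 i : ℝ)) (p.2 : ℝ)),
        (∫⁻ y in Cube (fun i => (p.1 i : ℝ)) (p.2 : ℝ), f y) /
          volume (Cube (fun i => (p.1 i : ℝ)) (p.2 : ℝ)) := by
    funext x; exact hlMaximal_eq_rat f x
  rw [key]
  refine Measurable.iSup fun p => ?_
  by_cases hp : (0:ℝ) < (p.2 : ℝ)
  · simp only [iSup_pos hp]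
    have : (fun x => ⨆ (_ : x ∈ Cube (fun i => (p.1 i : ℝ)) (p.2 : ℝ)),
        (∫⁻ y in Cube (fun i => (p.1 i : ℝ)) (p.2 : ℝ), f y) /
          volume (Cube (fun i => (p.1 i : ℝ)) (p.2 : ℝ))) =
        Set.indicator (Cube (fun i => (p.1 i : ℝ)) (p.2 : ℝ))
          (fun _ => (∫⁻ y in Cube (fun i => (p.1 i : ℝ)) (p.2 : ℝ), f y) /
            volume (Cube (fun i => (p.1 i : ℝ)) (p.2 : ℝ))) := by
      funext x
      by_cases hx : x ∈ Cube (fun i => (p.1 i : ℝ)) (p.2 : ℝ) <;>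
        simp [hx]
    rw [this]
    exact measurable_const.indicator (measurableSet_cube _ _)
  · simp only [hp]
    simp

/-- Hölder: the average of `f` over a cube is at most the `q`-average. -/
lemma avg_le_avg_rpow (f : (Fin n → ℝ) → ℝ≥0∞) (hf : Measurable f)
    {q : ℝ} (hq : 1 < q) (a : Fin n → ℝ) {h : ℝ} (hh : 0 < h) :
    (∫⁻ y in Cube a h, f y) / volume (Cube a h) ≤
      ((∫⁻ y in Cube a h, f y ^ q) / volume (Cube a h)) ^ (1 / q) := by
  set V := volume (Cube a h) with hV
  have hV0 : V ≠ 0 := (volume_cube_pos a hh).ne'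
  have hVtop : V ≠ ⊤ := (volume_cube_lt_top a h).ne
  set q' : ℝ := q / (q - 1) with hq'
  have hconj : q.HolderConjugate q' := Real.HolderConjugate.conjExponent hq
  have holder := ENNReal.lintegral_mul_le_Lp_mul_Lq (volume.restrict (Cube a h))
    hconj hf.aemeasurable (aemeasurable_const (b := (1:ℝ≥0∞)))
  simp only [Pi.mul_apply, mul_one, ENNReal.one_rpow] at holder
  have hVint : (∫⁻ _ in Cube a h, (1:ℝ≥0∞)) = V := by
    simp [hV]
  rw [hVint] at holder
  set A := ∫⁻ y in Cube a h, f y ^ q with hA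
  -- holder : ∫ f ≤ A ^ (1/q) * V ^ (1/q')
  have hsum : (1:ℝ) / q' + (-1) = -(1 / q) := by
    have := hconj.inv_add_inv_eq_one
    rw [one_div, one_div]
    linarith
  have key : A ^ (1 / q) * V ^ (1 / q') / V = (A / V) ^ (1 / q) := by
    rw [ENNReal.div_rpow_of_nonneg _ _ (by positivity : (0:ℝ) ≤ 1 / q),
      mul_div_assoc, div_eq_mul_inv, div_eq_mul_inv]
    congr 1
    rw [← ENNReal.rpow_neg_one V, ← ENNReal.rpow_add _ _ hV0 hVtop, hsum,
      ENNReal.rpow_neg]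
    norm_num
  rw [← key]
  exact ENNReal.div_le_div_right holder V

lemma hlMaximal_rpow_le (f : (Fin n → ℝ) → ℝ≥0∞) (hf : Measurable f)
    {q : ℝ} (hq : 1 < q) (x : Fin n → ℝ) :
    hlMaximal f x ^ q ≤ hlMaximal (fun y => f y ^ q) x := by
  have hq0 : (0:ℝ) < q := lt_trans one_pos hq
  have step : hlMaximal f x ≤ (hlMaximal (fun y => f y ^ q) x) ^ (1 / q) := by
    rw [hlMaximal]
    refine iSup_le fun a => iSup_le fun h => iSup_le fun hh => iSup_le fun hx => ?_
    refine le_trans (avg_le_avg_rpow f hf hq a hh) ?_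
    refine ENNReal.rpow_le_rpow ?_ (by positivity)
    rw [hlMaximal]
    refine le_trans ?_ (le_iSup _ a)
    refine le_trans ?_ (le_iSup _ h)
    rw [iSup_pos hh, iSup_pos hx]
  calc hlMaximal f x ^ q ≤ ((hlMaximal (fun y => f y ^ q) x) ^ (1 / q)) ^ q :=
        ENNReal.rpow_le_rpow step hq0.le
    _ = hlMaximal (fun y => f y ^ q) x := by
        rw [← ENNReal.rpow_mul, one_div, inv_mul_cancel₀ hq0.ne', ENNReal.rpow_one]

end Aux

/-- **Proposition 4.1(i)**: if `M` is bounded on `X`, then `M` is bounded on `X^r` for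
all `r ∈ (0,1)`. -/
theorem maximalBounded_powNorm_of_lt_one
    (n : ℕ) (hn : 0 < n) (X : BanachFunctionSpace n)
    (hM : MaximalBounded X.ρ) :
    ∀ r ∈ Set.Ioo (0 : ℝ) 1, MaximalBounded (powNorm X.ρ r) := by
  rintro r ⟨hr0, hr1⟩
  obtain ⟨C, hC⟩ := hM
  refine ⟨C ^ r, fun f hf => ?_⟩
  set q : ℝ := 1 / r with hqdef
  have hq : 1 < q := (one_lt_div hr0).mpr hr1
  have hq0 : (0:ℝ) < q := lt_trans one_pos hq
  have hfq : Measurable fun y => f y ^ q := hf.pow_const q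
  have key : X.ρ (fun x => hlMaximal f x ^ q) ≤ (C : ℝ≥0∞) * X.ρ (fun y => f y ^ q) := by
    refine le_trans (X.mono _ _ ((measurable_hlMaximal f).pow_const q)
      (measurable_hlMaximal _)
      (Filter.Eventually.of_forall fun x => hlMaximal_rpow_le f hf hq x)) ?_
    exact hC _ hfq
  calc powNorm X.ρ r (hlMaximal f)
      = X.ρ (fun x => hlMaximal f x ^ q) ^ r := rfl
    _ ≤ ((C : ℝ≥0∞) * X.ρ (fun y => f y ^ q)) ^ r :=
        ENNReal.rpow_le_rpow key hr0.le
    _ = (C : ℝ≥0∞) ^ r * X.ρ (fun y => f y ^ q) ^ r :=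
        ENNReal.mul_rpow_of_nonneg _ _ hr0.le
    _ = ((C ^ r : ℝ≥0) : ℝ≥0∞) * powNorm X.ρ r f := by
        rw [ENNReal.coe_rpow_of_nonneg _ hr0.le]; rfl

end
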